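/- arXiv:2005.03720 — 3 statements merged into one kernel-verified Lean document; each statement's English description precedes it below -/
import Mathlib

section
/- For every integer k ≥ 2, the proportion of coprime tuples among all k-event signals converges to 1/ζ(k): the limit as N → ∞ of |C(N,k)| / binomial(N,k) equals ζ(k)^{-1}, where ζ(k) = ∑_{n=1}^∞ n^{-k}. -/
open Filter

/-- The space of `k`-event signals: `k` inter-event intervals, each at least 1,
summing to at most `N`. -/
def SignalSpace (N k : ℕ) : Finset (Fin k → ℕ) :=
  (Fintype.piFinset fun _ => Finset.Icc 1 N).filter fun t => ∑ i, t i ≤ N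

/-- The signals in `SignalSpace N k` whose coordinates are coprime (gcd 1). -/
def CoprimeCode (N k : ℕ) : Finset (Fin k → ℕ) :=
  (SignalSpace N k).filter fun t => Finset.univ.gcd t = 1

/-- `ζ(k) = ∑_{n=1}^∞ n^{-k}`. -/
noncomputable def zetaSum (k : ℕ) : ℝ := ∑' n : ℕ, (1 : ℝ) / ((n : ℝ) + 1) ^ k

/-!
Möbius inversion over the gcd gives `#C(N,k) = ∑_{d ≤ N} μ(d) · #{t ∈ T(N,k) : d ∣ tᵢ for all i}`,
and dividing by `d` identifies that set with `T(⌊N/d⌋, k)`, which has `binom(⌊N/d⌋, k)` elements.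
So the density is `∑_d μ(d) · binom(⌊N/d⌋, k) / binom(N, k)`. Each term tends to `μ(d) / d^k`
and, once `N ≥ 2k`, is bounded by `2^k / d^k`, which is summable for `k ≥ 2`; by Tannery's
theorem the density tends to `∑_d μ(d) / d^k = 1 / ζ(k)`.
-/

open Finset ArithmeticFunction Asymptotics Topology
open scoped ArithmeticFunction.Moebius ArithmeticFunction.zeta LSeries.notation

theorem mem_signalSpace {N k : ℕ} {t : Fin k → ℕ} :
    t ∈ SignalSpace N k ↔ (∀ i, 1 ≤ t i) ∧ ∑ i, t i ≤ N := by
  simp only [SignalSpace, mem_filter, Fintype.mem_piFinset, mem_Icc, forall_and]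
  exact ⟨fun h => ⟨h.1.1, h.2⟩, fun h =>
    ⟨⟨h.1, fun i => (single_le_sum (fun j _ => Nat.zero_le (t j)) (mem_univ i)).trans h.2⟩, h.2⟩⟩

theorem cons_mem_signalSpace {N k a : ℕ} {s : Fin k → ℕ} :
    Fin.cons a s ∈ SignalSpace N (k + 1) ↔ 1 ≤ a ∧ (∀ i, 1 ≤ s i) ∧ a + ∑ i, s i ≤ N := by
  simp only [mem_signalSpace, Fin.forall_fin_succ, Fin.sum_univ_succ, Fin.cons_zero,
    Fin.cons_succ, and_assoc]

-- A signal whose first interval is 1 loses it; otherwise the first interval is shortened by 1.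
theorem card_signalSpace_succ_succ (N k : ℕ) :
    #(SignalSpace (N + 1) (k + 1)) = #(SignalSpace N k) + #(SignalSpace N (k + 1)) := by
  rw [← card_filter_add_card_filter_not (fun t : Fin (k + 1) → ℕ => t 0 = 1)]
  congr 1
  · refine card_nbij' Fin.tail (fun s => Fin.cons 1 s) ?_ ?_ ?_ ?_
    · intro t ht
      induction t using Fin.consCases
      rw [mem_coe, mem_filter, cons_mem_signalSpace] at ht
      simp only [Fin.cons_zero] at ht
      exact mem_signalSpace.2 ⟨ht.1.2.1, by simp only [Fin.tail_cons]; omega⟩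
    · intro s hs
      rw [mem_coe, mem_signalSpace] at hs
      rw [mem_coe, mem_filter, cons_mem_signalSpace]
      exact ⟨⟨le_rfl, hs.1, by omega⟩, rfl⟩
    · intro t ht
      induction t using Fin.consCases
      simp_all
    · intro s _
      simp
  · refine card_nbij' (fun t => Fin.cons (t 0 - 1) (Fin.tail t))
      (fun s => Fin.cons (s 0 + 1) (Fin.tail s)) ?_ ?_ ?_ ?_
    all_goals
      intro t ht
      induction t using Fin.consCases
      simp_all [cons_mem_signalSpace]
    all_goals omega

theorem card_signalSpace (N k : ℕ) : #(SignalSpace N k) = N.choose k := by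
  induction k generalizing N with
  | zero =>
    rw [Nat.choose_zero_right, card_eq_one]
    exact ⟨Fin.elim0, by ext t; simp [mem_signalSpace, Subsingleton.elim t Fin.elim0]⟩
  | succ k ih =>
    induction N with
    | zero =>
      rw [Nat.choose_zero_succ, card_eq_zero, eq_empty_iff_forall_notMem]
      intro t ht
      induction t using Fin.consCases
      rw [cons_mem_signalSpace] at ht
      omega
    | succ N ihN => rw [card_signalSpace_succ_succ, ih, ihN, Nat.choose_succ_succ']

theorem mul_mem_signalSpace_iff {N k d : ℕ} (hd : d ≠ 0) {s : Fin k → ℕ} :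
    (fun i => d * s i) ∈ SignalSpace N k ↔ s ∈ SignalSpace (N / d) k := by
  rw [mem_signalSpace, mem_signalSpace, ← mul_sum, mul_comm, ← Nat.le_div_iff_mul_le (by omega)]
  simp only [Nat.one_le_iff_ne_zero, mul_ne_zero_iff, ne_eq, hd, not_false_eq_true, true_and]

theorem card_filter_dvd_signalSpace {d : ℕ} (hd : d ≠ 0) (N k : ℕ) :
    #{t ∈ SignalSpace N k | ∀ i, d ∣ t i} = (N / d).choose k := by
  rw [← card_signalSpace]
  refine card_nbij' (fun t i => t i / d) (fun s i => d * s i) ?_ ?_ ?_ ?_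
  · intro t ht
    rw [mem_coe, mem_filter] at ht
    rw [mem_coe, ← mul_mem_signalSpace_iff hd]
    simpa only [Nat.mul_div_cancel' (ht.2 _)] using ht.1
  · intro s hs
    rw [mem_coe, ← mul_mem_signalSpace_iff hd] at hs
    exact mem_filter.2 ⟨hs, fun i => dvd_mul_right d (s i)⟩
  · intro t ht
    funext i
    exact Nat.mul_div_cancel' ((mem_filter.1 ht).2 i)
  · intro s _
    funext i
    exact Nat.mul_div_cancel_left _ (Nat.pos_of_ne_zero hd)

theorem sum_divisors_moebius {R : Type*} [Ring R] (n : ℕ) :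
    ∑ d ∈ n.divisors, (μ d : R) = if n = 1 then 1 else 0 := by
  simpa only [coe_mul_zeta_apply, intCoe_apply, one_apply] using
    congrArg (· n) (coe_moebius_mul_coe_zeta (R := R))

theorem card_filter_eq_one_eq_sum_moebius {α R : Type*} [Ring R] (s : Finset α) (g : α → ℕ)
    {N : ℕ} (hg : ∀ x ∈ s, g x ∈ Icc 1 N) :
    (#{x ∈ s | g x = 1} : R) = ∑ d ∈ Icc 1 N, (μ d : R) * #{x ∈ s | d ∣ g x} := by
  have hdiv : ∀ x ∈ s, (g x).divisors = {d ∈ Icc 1 N | d ∣ g x} := by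
    intro x hx
    obtain ⟨hpos, hle⟩ := mem_Icc.1 (hg x hx)
    ext d
    simp only [Nat.mem_divisors, mem_filter, mem_Icc]
    exact ⟨fun ⟨hdvd, _⟩ => ⟨⟨Nat.pos_of_dvd_of_pos hdvd hpos, (Nat.le_of_dvd hpos hdvd).trans hle⟩,
      hdvd⟩, fun ⟨_, hdvd⟩ => ⟨hdvd, by omega⟩⟩
  calc (#{x ∈ s | g x = 1} : R) = ∑ x ∈ s, ∑ d ∈ (g x).divisors, (μ d : R) := by
        rw [natCast_card_filter]
        exact sum_congr rfl fun x _ => (sum_divisors_moebius (g x)).symm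
    _ = ∑ x ∈ s, ∑ d ∈ Icc 1 N, if d ∣ g x then (μ d : R) else 0 := by
        refine sum_congr rfl fun x hx => ?_
        rw [hdiv x hx, sum_filter]
    _ = ∑ d ∈ Icc 1 N, (μ d : R) * #{x ∈ s | d ∣ g x} := by
        rw [sum_comm]
        refine sum_congr rfl fun d _ => ?_
        rw [← sum_filter, sum_const, nsmul_eq_mul']

theorem gcd_mem_Icc_of_mem_signalSpace {N k : ℕ} (hk : k ≠ 0) {t : Fin k → ℕ}
    (ht : t ∈ SignalSpace N k) : univ.gcd t ∈ Icc 1 N := by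
  obtain ⟨hpos, hsum⟩ := mem_signalSpace.1 ht
  let i : Fin k := ⟨0, Nat.pos_of_ne_zero hk⟩
  have hdvd : univ.gcd t ∣ t i := gcd_dvd (mem_univ i)
  have hle : t i ≤ N := (single_le_sum (fun j _ => Nat.zero_le (t j)) (mem_univ i)).trans hsum
  exact mem_Icc.2 ⟨Nat.pos_of_dvd_of_pos hdvd (hpos i), (Nat.le_of_dvd (hpos i) hdvd).trans hle⟩

theorem card_coprimeCode_eq_sum_moebius {R : Type*} [Ring R] {k : ℕ} (hk : k ≠ 0) (N : ℕ) :
    (#(CoprimeCode N k) : R) = ∑ d ∈ Icc 1 N, (μ d : R) * (N / d).choose k := by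
  rw [CoprimeCode, card_filter_eq_one_eq_sum_moebius _ _
    fun t ht => gcd_mem_Icc_of_mem_signalSpace hk ht]
  refine sum_congr rfl fun d hd => ?_
  simp only [Finset.dvd_gcd_iff, mem_univ, true_implies]
  rw [card_filter_dvd_signalSpace (by have := (mem_Icc.1 hd).1; omega)]

theorem card_coprimeCode_div_choose_eq_tsum {k : ℕ} (hk : k ≠ 0) (N : ℕ) :
    (#(CoprimeCode N k) : ℝ) / N.choose k =
      ∑' d : ℕ, (μ d : ℝ) * ((N / d).choose k / N.choose k) := by
  rw [card_coprimeCode_eq_sum_moebius hk, sum_div, tsum_eq_sum (s := Icc 1 N)]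
  · exact sum_congr rfl fun d _ => mul_div_assoc _ _ _
  · intro d hd
    rcases Nat.eq_zero_or_pos d with rfl | hpos
    · simp
    · rw [Nat.div_eq_of_lt (by simp at hd; omega), Nat.choose_eq_zero_of_lt (by omega)]
      simp

theorem isEquivalent_natCast_div_const {d : ℕ} (hd : d ≠ 0) :
    (fun N : ℕ => ((N / d : ℕ) : ℝ)) ~[atTop] fun N => (N : ℝ) / d := by
  refine isEquivalent_of_tendsto_one ?_
  have hlim := tendsto_nat_floor_div_atTop.comp
    (tendsto_natCast_atTop_atTop.atTop_div_const (r := (d : ℝ)) (by positivity))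
  refine hlim.congr fun N => ?_
  simp [Nat.floor_div_natCast]

theorem tendsto_choose_div_div_choose (k : ℕ) {d : ℕ} (hd : d ≠ 0) :
    Tendsto (fun N : ℕ => ((N / d).choose k : ℝ) / N.choose k) atTop (𝓝 (1 / d ^ k)) := by
  have hnum : (fun N : ℕ => ((N / d).choose k : ℝ)) ~[atTop]
      fun N => ((N : ℝ) / d) ^ k / k.factorial :=
    ((isEquivalent_choose k).comp_tendsto (Nat.tendsto_div_const_atTop hd)).trans
      (((isEquivalent_natCast_div_const hd).pow k).div IsEquivalent.refl)
  refine (hnum.div (isEquivalent_choose k)).symm.tendsto_nhds (tendsto_const_nhds.congr' ?_)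
  filter_upwards [eventually_ne_atTop 0] with N hN
  have : (N : ℝ) ≠ 0 := by exact_mod_cast hN
  have : (d : ℝ) ≠ 0 := by exact_mod_cast hd
  simp only [Pi.div_apply, div_pow]
  field_simp

theorem tendsto_moebius_mul_choose_div_div_choose (k d : ℕ) :
    Tendsto (fun N : ℕ => (μ d : ℝ) * ((N / d).choose k / N.choose k)) atTop
      (𝓝 ((μ d : ℝ) / d ^ k)) := by
  rcases eq_or_ne d 0 with rfl | hd
  · simp
  · simpa only [mul_one_div] using (tendsto_choose_div_div_choose k hd).const_mul (μ d : ℝ)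

theorem pow_mul_choose_div_le {N k : ℕ} (d : ℕ) (h : 2 * k ≤ N) :
    d ^ k * (N / d).choose k ≤ 2 ^ k * N.choose k := by
  refine Nat.le_of_mul_le_mul_left ?_ k.factorial_pos
  calc k.factorial * (d ^ k * (N / d).choose k) = d ^ k * (N / d).descFactorial k := by
        rw [Nat.descFactorial_eq_factorial_mul_choose]; ring
    _ ≤ d ^ k * (N / d) ^ k := Nat.mul_le_mul_left _ (Nat.descFactorial_le_pow _ k)
    _ = (d * (N / d)) ^ k := (mul_pow _ _ _).symm
    _ ≤ (2 * (N + 1 - k)) ^ k := Nat.pow_le_pow_left (by have := Nat.mul_div_le N d; omega) k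
    _ = 2 ^ k * (N + 1 - k) ^ k := mul_pow _ _ _
    _ ≤ 2 ^ k * N.descFactorial k := Nat.mul_le_mul_left _ (Nat.pow_sub_le_descFactorial N k)
    _ = k.factorial * (2 ^ k * N.choose k) := by
        rw [Nat.descFactorial_eq_factorial_mul_choose]; ring

theorem choose_div_div_choose_le {N k d : ℕ} (hd : d ≠ 0) (h : 2 * k ≤ N) :
    ((N / d).choose k : ℝ) / N.choose k ≤ 2 ^ k / d ^ k := by
  have hchoose : (0 : ℝ) < N.choose k := by exact_mod_cast Nat.choose_pos (by omega)
  have hd' : (0 : ℝ) < (d : ℝ) ^ k := by positivity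
  rw [div_le_div_iff₀ hchoose hd', mul_comm]
  exact_mod_cast pow_mul_choose_div_le d h

theorem norm_moebius_mul_choose_div_div_choose_le {N k : ℕ} (hk : k ≠ 0) (h : 2 * k ≤ N)
    (d : ℕ) : ‖(μ d : ℝ) * ((N / d).choose k / N.choose k)‖ ≤ 2 ^ k / d ^ k := by
  rcases eq_or_ne d 0 with rfl | hd
  · simp [zero_pow hk]
  have hratio : (0 : ℝ) ≤ (N / d).choose k / N.choose k := by positivity
  calc ‖(μ d : ℝ) * ((N / d).choose k / N.choose k)‖
      = |(μ d : ℝ)| * ((N / d).choose k / N.choose k) := by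
        rw [norm_mul, Real.norm_eq_abs, Real.norm_of_nonneg hratio]
    _ ≤ (N / d).choose k / N.choose k :=
        mul_le_of_le_one_left hratio (by exact_mod_cast abs_moebius_le_one)
    _ ≤ 2 ^ k / d ^ k := choose_div_div_choose_le hd h

theorem zetaSum_eq_tsum_one_div_pow {k : ℕ} (hk : 1 < k) :
    zetaSum k = ∑' n : ℕ, 1 / (n : ℝ) ^ k := by
  rw [(Real.summable_one_div_nat_pow.2 hk).tsum_eq_zero_add, zetaSum]
  simp [(zero_lt_one.trans hk).ne']

theorem tsum_moebius_div_pow {k : ℕ} (hk : 1 < k) :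
    ∑' d : ℕ, (μ d : ℝ) / d ^ k = (zetaSum k)⁻¹ := by
  have hs : 1 < (k : ℂ).re := by simp only [Complex.natCast_re]; exact_mod_cast hk
  have hzeta : L ↗ζ k = (zetaSum k : ℂ) := by
    rw [LSeries_zeta_eq_riemannZeta hs, zeta_nat_eq_tsum_of_gt_one hk,
      zetaSum_eq_tsum_one_div_pow hk, Complex.ofReal_tsum]
    push_cast
    rfl
  have hmoebius : L ↗μ k = ((∑' d : ℕ, (μ d : ℝ) / d ^ k : ℝ) : ℂ) := by
    rw [LSeries, Complex.ofReal_tsum]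
    refine tsum_congr fun n => ?_
    rcases eq_or_ne n 0 with rfl | hn
    · simp
    · simp [LSeries.term_of_ne_zero hn, Complex.cpow_natCast]
  have hmul := LSeries_zeta_mul_Lseries_moebius hs
  rw [hzeta, hmoebius, ← Complex.ofReal_mul, Complex.ofReal_eq_one] at hmul
  exact eq_inv_of_mul_eq_one_right hmul

theorem coprimeCode_density (k : ℕ) (hk : 2 ≤ k) :
    Tendsto (fun N : ℕ => ((CoprimeCode N k).card : ℝ) / (N.choose k : ℝ)) atTop
      (nhds (zetaSum k)⁻¹) := by
  have hsum : Summable fun d : ℕ => (2 : ℝ) ^ k / d ^ k := by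
    simpa only [mul_one_div] using (Real.summable_one_div_nat_pow.2 hk).mul_left ((2 : ℝ) ^ k)
  have hbound := (eventually_ge_atTop (2 * k)).mono fun N hN =>
    norm_moebius_mul_choose_div_div_choose_le (by omega) hN
  have hlim := tendsto_tsum_of_dominated_convergence hsum
    (tendsto_moebius_mul_choose_div_div_choose k) hbound
  rw [tsum_moebius_div_pow hk] at hlim
  exact hlim.congr fun N => (card_coprimeCode_div_choose_eq_tsum (by omega) N).symm
end

section
/- Let ᾱ > 1 be a real number, let (d_n)_{n≥1} be defined by d_1 = 1 and d_n = ⌈ᾱ · d_{n−1}⌉ for n ≥ 2, and let D(N,k) = { t ∈ T(N,k) : gcd(t_1, …, t_k) ∈ {d_1, d_2, d_3, …} }. Then D(N,k) is a zero-error code: for any two distinct u, v ∈ D(N,k) there do not exist real numbers c', c'' with 1 ≤ c' < ᾱ and 1 ≤ c'' < ᾱ such that c'·u = c''·v as vectors in ℝ^k. -/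
theorem dCode_zero_error (N k : ℕ) (hN : 0 < N) (hk : 0 < k)
    (a : ℝ) (ha : 1 < a) (d : ℕ → ℕ) (hd1 : d 1 = 1)
    (hrec : ∀ n, 1 ≤ n → (d (n + 1) : ℤ) = ⌈a * (d n : ℝ)⌉)
    (D : Finset (Fin k → ℕ))
    (hD : ∀ t, t ∈ D ↔ t ∈ SignalSpace N k ∧ ∃ n, 1 ≤ n ∧ Finset.univ.gcd t = d n) :
    ∀ u ∈ D, ∀ v ∈ D, u ≠ v →
      ¬ ∃ c' c'' : ℝ, 1 ≤ c' ∧ c' < a ∧ 1 ≤ c'' ∧ c'' < a ∧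
        ∀ i, c' * (u i : ℝ) = c'' * (v i : ℝ) := by
  -- positivity of d
  have hpos : ∀ p, 1 ≤ p → 1 ≤ d p := by
    intro p hp
    induction p with
    | zero => omega
    | succ q ih =>
      rcases Nat.lt_or_ge q 1 with h | h
      · interval_cases q
        · simpa using hd1.ge
      · have hdq := ih h
        have h1 : (1:ℝ) ≤ a * (d q : ℝ) := by
          have : (1:ℝ) ≤ (d q : ℝ) := by exact_mod_cast hdq
          nlinarith
        have h2 : (1:ℤ) ≤ (d (q+1) : ℤ) := by
          rw [hrec q h]
          calc (1:ℤ) = ⌈(1:ℝ)⌉ := by simp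
          _ ≤ ⌈a * (d q : ℝ)⌉ := Int.ceil_mono h1
        exact_mod_cast h2
  -- monotonicity of d
  have hstep : ∀ q, 1 ≤ q → d q ≤ d (q+1) := by
    intro q hq
    have h1 : ((d q : ℤ) : ℝ) ≤ a * (d q : ℝ) := by
      have h0 : (0:ℝ) ≤ (d q : ℝ) := by positivity
      push_cast
      nlinarith
    have h2 : (d q : ℤ) ≤ (d (q+1) : ℤ) := by
      rw [hrec q hq]
      calc (d q : ℤ) = ⌈((d q : ℤ) : ℝ)⌉ := by simp
      _ ≤ ⌈a * (d q : ℝ)⌉ := Int.ceil_mono h1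
    exact_mod_cast h2
  have hmono : ∀ p q, 1 ≤ p → p ≤ q → d p ≤ d q := by
    intro p q hp hpq
    induction q with
    | zero => omega
    | succ r ih =>
      rcases Nat.lt_or_ge r p with h | h
      · have hpr : p = r + 1 := by omega
        rw [hpr]
      · exact le_trans (ih h) (hstep r (le_trans hp h))
  -- key gap lemma
  have hkey : ∀ p q, 1 ≤ p → 1 ≤ q → d p < d q → a * (d p : ℝ) ≤ (d q : ℝ) := by
    intro p q hp hq hlt
    have hpq : p < q := by
      by_contra hcon
      push_neg at hcon
      exact absurd (hmono q p hq hcon) (by omega)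
    obtain ⟨r, rfl⟩ : ∃ r, q = r + 1 := ⟨q - 1, by omega⟩
    have hr : 1 ≤ r := by omega
    have hpr : d p ≤ d r := hmono p r hp (by omega)
    have h1 : a * (d p : ℝ) ≤ a * (d r : ℝ) := by
      have : (d p : ℝ) ≤ (d r : ℝ) := by exact_mod_cast hpr
      nlinarith
    have h2 : a * (d r : ℝ) ≤ ((d (r+1) : ℤ) : ℝ) := by
      rw [hrec r hr]
      exact Int.le_ceil _
    calc a * (d p : ℝ) ≤ a * (d r : ℝ) := h1
    _ ≤ ((d (r+1) : ℤ) : ℝ) := h2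
    _ = (d (r+1) : ℝ) := by push_cast; ring
  intro u hu v hv huv
  rintro ⟨c', c'', hc1, hc2, hc3, hc4, heq⟩
  obtain ⟨hu_space, m, hm1, hgu⟩ := (hD u).mp hu
  obtain ⟨hv_space, n, hn1, hgv⟩ := (hD v).mp hv
  have hupos : ∀ i, 1 ≤ u i := by
    intro i
    have h := (Finset.mem_filter.mp hu_space).1
    exact (Finset.mem_Icc.mp (Fintype.mem_piFinset.mp h i)).1
  have hvpos : ∀ i, 1 ≤ v i := by
    intro i
    have h := (Finset.mem_filter.mp hv_space).1
    exact (Finset.mem_Icc.mp (Fintype.mem_piFinset.mp h i)).1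
  have hc'pos : (0:ℝ) < c' := by linarith
  have hc''pos : (0:ℝ) < c'' := by linarith
  -- cross products
  have hcross : ∀ i j, u i * v j = u j * v i := by
    intro i j
    have h1 := heq i
    have h2 := heq j
    have hR : (u i : ℝ) * (v j : ℝ) = (u j : ℝ) * (v i : ℝ) := by
      have hcc : c' * c'' ≠ 0 := by positivity
      apply mul_left_cancel₀ hcc
      calc c' * c'' * ((u i : ℝ) * (v j : ℝ))
          = (c' * (u i : ℝ)) * (c'' * (v j : ℝ)) := by ring
        _ = (c'' * (v i : ℝ)) * (c' * (u j : ℝ)) := by rw [h1, h2]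
        _ = c' * c'' * ((u j : ℝ) * (v i : ℝ)) := by ring
    exact_mod_cast hR
  -- gcd relation: u i * d n = v i * d m
  have hgcd : ∀ i, u i * d n = v i * d m := by
    intro i
    have h1 : (Finset.univ.gcd fun j => u i * v j) = u i * Finset.univ.gcd v := by
      simpa using (Finset.gcd_mul_left (a := u i) (s := Finset.univ) (f := v))
    have h2 : (Finset.univ.gcd fun j => v i * u j) = v i * Finset.univ.gcd u := by
      simpa using (Finset.gcd_mul_left (a := v i) (s := Finset.univ) (f := u))
    have h3 : (Finset.univ.gcd fun j => u i * v j)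
        = (Finset.univ.gcd fun j => v i * u j) := by
      apply Finset.gcd_congr rfl
      intro j _
      rw [hcross i j]; ring
    rw [h1, h2, hgv, hgu] at h3
    linarith [h3]
  -- main ratio identity
  obtain ⟨i⟩ : Nonempty (Fin k) := ⟨⟨0, hk⟩⟩
  have hvipos : (0:ℝ) < (v i : ℝ) := by exact_mod_cast hvpos i
  have hratio : c' * (d m : ℝ) = c'' * (d n : ℝ) := by
    have hR : (u i : ℝ) * (d n : ℝ) = (v i : ℝ) * (d m : ℝ) := by
      exact_mod_cast hgcd i
    have h1 := heq i
    apply mul_right_cancel₀ (ne_of_gt hvipos)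
    calc c' * (d m : ℝ) * (v i : ℝ) = c' * ((v i : ℝ) * (d m : ℝ)) := by ring
    _ = c' * ((u i : ℝ) * (d n : ℝ)) := by rw [hR]
    _ = (c' * (u i : ℝ)) * (d n : ℝ) := by ring
    _ = (c'' * (v i : ℝ)) * (d n : ℝ) := by rw [h1]
    _ = c'' * (d n : ℝ) * (v i : ℝ) := by ring
  have hdm : 1 ≤ d m := hpos m hm1
  have hdn : 1 ≤ d n := hpos n hn1
  have hdmR : (1:ℝ) ≤ (d m : ℝ) := by exact_mod_cast hdm
  have hdnR : (1:ℝ) ≤ (d n : ℝ) := by exact_mod_cast hdn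
  rcases lt_trichotomy (d m) (d n) with hlt | heqd | hlt
  · have h := hkey m n hm1 hn1 hlt
    nlinarith
  · -- equal gcds ⇒ u = v
    apply huv
    funext j
    have := hgcd j
    rw [heqd] at this
    have := Nat.eq_of_mul_eq_mul_right (by omega : 0 < d n) this
    exact this
  · have h := hkey n m hn1 hm1 hlt
    nlinarith
end

section
/- The largest asymptotic density of a set of 2-event signals distinguishable by a receiver experiencing unbounded time dilation is 6/π²: the limit as N → ∞ of |{ (t_1, t_2) ∈ ℕ² : t_1, t_2 ≥ 1, t_1 + t_2 ≤ N, gcd(t_1, t_2) = 1 }| / binomial(N, 2) equals 6/π². -/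
open Filter

/-! Möbius inversion over the gcd gives `#C(N,2) = ∑_{d ≤ N} μ(d) · binom(⌊N/d⌋, 2)`, because the
signals of `T(N,2)` with both coordinates divisible by `d` are `d` times the signals of
`T(⌊N/d⌋,2)`, and `#T(M,2) = binom(M,2)`. Dividing by `binom(N,2)`, the `d`-th term tends to
`μ(d)/d²` and is dominated by `1/d²`, so by Tannery's theorem the density tends to
`∑ μ(d)/d² = 1/ζ(2) = 6/π²`. -/

open Finset ArithmeticFunction Topology Real
open scoped ArithmeticFunction.Moebius LSeries.notation

def signalPairs (N : ℕ) : Finset (ℕ × ℕ) :=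
  (Icc 1 N ×ˢ Icc 1 N).filter fun p => p.1 + p.2 ≤ N

@[simp]
lemma mem_signalPairs {N : ℕ} {p : ℕ × ℕ} :
    p ∈ signalPairs N ↔ 1 ≤ p.1 ∧ 1 ≤ p.2 ∧ p.1 + p.2 ≤ N := by
  simp only [signalPairs, mem_filter, mem_product, mem_Icc]
  omega

lemma card_coprimeCode_two (N : ℕ) :
    #(CoprimeCode N 2) = #{p ∈ signalPairs N | p.1.Coprime p.2} := by
  refine card_equiv (finTwoArrowEquiv ℕ) fun t => ?_
  have hgcd : univ.gcd t = (t 0).gcd (t 1) := by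
    rw [univ_fin2, gcd_insert, gcd_singleton, normalize_eq]
    rfl
  simp only [CoprimeCode, SignalSpace, mem_filter, Fintype.mem_piFinset, Fin.forall_fin_two,
    mem_Icc, Fin.sum_univ_two, hgcd, Nat.Coprime, finTwoArrowEquiv_apply, Equiv.toFun_as_coe,
    piFinTwoEquiv_apply, mem_signalPairs, and_congr_left_iff]
  omega

lemma card_signalPairs (N : ℕ) : #(signalPairs N) = N.choose 2 := by
  calc #(signalPairs N) = ∑ a ∈ Icc 1 N, #(Icc 1 (N - a)) := by
        rw [card_eq_sum_card_fiberwise (f := Prod.fst) (t := Icc 1 N) fun p hp => by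
          simp only [SetLike.mem_coe, mem_signalPairs, coe_Icc, Set.mem_Icc] at hp ⊢
          omega]
        refine sum_congr rfl fun a ha => ?_
        rw [← card_map ⟨(a, ·), Prod.mk_right_injective a⟩ (s := Icc 1 (N - a))]
        refine congrArg card ?_
        ext ⟨x, y⟩
        simp only [mem_Icc, mem_filter, mem_signalPairs, Finset.mem_map,
          Function.Embedding.coeFn_mk, Prod.mk.injEq, exists_eq_right_right] at ha ⊢
        omega
    _ = ∑ i ∈ range N, i := by
        rw [← Ico_add_one_right_eq_Icc, sum_Ico_eq_sum_range, ← sum_range_reflect]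
        refine sum_congr (by rw [add_tsub_cancel_right]) fun i hi => ?_
        rw [Nat.card_Icc]
        simp only [mem_range] at hi
        omega
    _ = N.choose 2 := by rw [sum_range_id, Nat.choose_two_right]

lemma image_scale_signalPairs {d : ℕ} (N : ℕ) (hd : 0 < d) :
    (signalPairs (N / d)).image (fun p => (d * p.1, d * p.2)) =
      {p ∈ signalPairs N | d ∣ p.1 ∧ d ∣ p.2} := by
  ext ⟨a, b⟩
  simp only [mem_image, mem_filter, mem_signalPairs, Prod.mk.injEq, Prod.exists]
  constructor
  · rintro ⟨x, y, ⟨hx, hy, hxy⟩, rfl, rfl⟩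
    have := (Nat.le_div_iff_mul_le hd).1 hxy
    refine ⟨⟨?_, ?_, ?_⟩, dvd_mul_right _ _, dvd_mul_right _ _⟩ <;> nlinarith
  · rintro ⟨⟨ha, hb, hab⟩, ⟨x, rfl⟩, ⟨y, rfl⟩⟩
    refine ⟨x, y, ⟨?_, ?_, (Nat.le_div_iff_mul_le hd).2 (by linarith)⟩, rfl, rfl⟩
    · exact Nat.pos_of_mul_pos_left ha
    · exact Nat.pos_of_mul_pos_left hb

lemma card_filter_dvd_signalPairs {d : ℕ} (N : ℕ) (hd : 0 < d) :
    #{p ∈ signalPairs N | d ∣ p.1 ∧ d ∣ p.2} = (N / d).choose 2 := by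
  rw [← image_scale_signalPairs N hd, card_image_of_injective, card_signalPairs]
  intro p q h
  simp only [Prod.mk.injEq, mul_right_inj' hd.ne'] at h
  exact Prod.ext h.1 h.2

lemma card_filter_coprime_signalPairs (N : ℕ) :
    (#{p ∈ signalPairs N | p.1.Coprime p.2} : ℤ) =
      ∑ d ∈ Icc 1 N, μ d * (N / d).choose 2 := by
  have hμ : ∀ p ∈ signalPairs N, (if p.1.Coprime p.2 then 1 else 0 : ℤ) =
      ∑ d ∈ (p.1.gcd p.2).divisors, μ d := fun p _ => by
    rw [← coe_mul_zeta_apply, moebius_mul_coe_zeta, one_apply]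
  calc (#{p ∈ signalPairs N | p.1.Coprime p.2} : ℤ)
      = ∑ p ∈ signalPairs N, ∑ d ∈ (p.1.gcd p.2).divisors, μ d := by
        rw [natCast_card_filter, sum_congr rfl hμ]
    _ = ∑ d ∈ Icc 1 N, ∑ p ∈ signalPairs N with d ∣ p.1 ∧ d ∣ p.2, μ d := by
        refine sum_comm' fun p d => ?_
        simp only [mem_signalPairs, Nat.mem_divisors, mem_filter, mem_Icc, Nat.dvd_gcd_iff]
        constructor
        · rintro ⟨hp, ⟨hda, hdb⟩, -⟩
          have := Nat.le_of_dvd hp.1 hda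
          exact ⟨⟨hp, hda, hdb⟩, Nat.pos_of_dvd_of_pos hda hp.1, by omega⟩
        · rintro ⟨⟨hp, hda, hdb⟩, -⟩
          exact ⟨hp, ⟨hda, hdb⟩, (Nat.gcd_pos_of_pos_left _ hp.1).ne'⟩
    _ = ∑ d ∈ Icc 1 N, μ d * (N / d).choose 2 := by
        refine sum_congr rfl fun d hd => ?_
        rw [sum_const, card_filter_dvd_signalPairs N (mem_Icc.1 hd).1, nsmul_eq_mul, mul_comm]

lemma card_coprimeCode_two_div_choose_two (N : ℕ) :
    (#(CoprimeCode N 2) : ℝ) / N.choose 2 =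
      ∑' d : ℕ, (μ d : ℝ) * (((N / d).choose 2 : ℝ) / N.choose 2) := by
  have hsupport : ∀ d ∉ Icc 1 N, (μ d : ℝ) * (((N / d).choose 2 : ℝ) / N.choose 2) = 0 := by
    intro d hd
    rcases Nat.eq_zero_or_pos d with rfl | hd0
    · simp
    · simp only [mem_Icc, not_and, not_le] at hd
      simp [Nat.div_eq_of_lt (hd hd0)]
  have hcard : (#(CoprimeCode N 2) : ℝ) = ∑ d ∈ Icc 1 N, (μ d : ℝ) * (N / d).choose 2 := by
    exact_mod_cast congrArg (Int.cast (R := ℝ))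
      (card_coprimeCode_two N ▸ card_filter_coprime_signalPairs N)
  rw [tsum_eq_sum hsupport, hcard, sum_div]
  simp only [mul_div_assoc]

lemma tendsto_nat_div_const_div_self (d : ℕ) :
    Tendsto (fun N : ℕ => ((N / d : ℕ) : ℝ) / N) atTop (𝓝 (1 / d)) := by
  refine ((tendsto_nat_floor_mul_div_atTop (a := (1 / d : ℝ)) (by positivity)).comp
    tendsto_natCast_atTop_atTop).congr fun N => ?_
  rw [Function.comp_apply, one_div_mul_eq_div, Nat.floor_div_eq_div]

lemma tendsto_choose_two_div_sq {a : ℕ → ℕ} {c : ℝ}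
    (h : Tendsto (fun N : ℕ => (a N : ℝ) / N) atTop (𝓝 c)) :
    Tendsto (fun N : ℕ => ((a N).choose 2 : ℝ) / N ^ 2) atTop (𝓝 (c ^ 2 / 2)) := by
  have hlim := (h.mul (h.sub tendsto_one_div_atTop_nhds_zero_nat)).div_const 2
  rw [sub_zero, ← sq] at hlim
  refine hlim.congr' ((eventually_ne_atTop 0).mono fun N hN => ?_)
  show _ = ((a N).choose 2 : ℝ) / N ^ 2
  rw [Nat.cast_choose_two]
  field_simp

lemma tendsto_choose_two_div_div_choose_two (d : ℕ) :
    Tendsto (fun N : ℕ => ((N / d).choose 2 : ℝ) / N.choose 2) atTop (𝓝 (1 / d ^ 2)) := by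
  have hnum := tendsto_choose_two_div_sq (tendsto_nat_div_const_div_self d)
  have hden := tendsto_choose_two_div_sq (by simpa using tendsto_nat_div_const_div_self 1)
  have hlim := hnum.div hden (by norm_num)
  rw [show (1 / d : ℝ) ^ 2 / 2 / (1 ^ 2 / 2) = 1 / d ^ 2 by ring] at hlim
  refine hlim.congr' ((eventually_ne_atTop 0).mono fun N hN => ?_)
  simp only [Pi.div_apply]
  field_simp

lemma choose_two_div_div_choose_two_le (N d : ℕ) :
    ((N / d).choose 2 : ℝ) / N.choose 2 ≤ 1 / d ^ 2 := by
  rcases Nat.eq_zero_or_pos d with rfl | hd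
  · simp
  rcases Nat.eq_zero_or_pos (N.choose 2) with hN | hN
  · simp [hN]
  have hdm : ((d : ℝ) * (N / d : ℕ)) ≤ N := by exact_mod_cast Nat.mul_div_le N d
  have hN1 : (1 : ℝ) ≤ N := by
    by_contra h
    rw [Nat.choose_eq_zero_of_lt (by exact_mod_cast (by linarith : (N : ℝ) < 2))] at hN
    exact hN.false
  have hd1 : (1 : ℝ) ≤ d := by exact_mod_cast hd
  rw [div_le_div_iff₀ (by exact_mod_cast hN) (by positivity), Nat.cast_choose_two,
    Nat.cast_choose_two]
  -- `N(N-1) - dm(dm-d) = (N-dm)(N-1) + dm(N-dm+d-1)` with `m = ⌊N/d⌋`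
  nlinarith [mul_nonneg (sub_nonneg.2 hdm) (sub_nonneg.2 hN1),
    mul_nonneg (by positivity : (0 : ℝ) ≤ d * (N / d : ℕ))
      (by linarith : (0 : ℝ) ≤ N - d * (N / d : ℕ) + d - 1)]

lemma hasSum_moebius_div_sq : HasSum (fun d : ℕ => (μ d : ℝ) / d ^ 2) (6 / π ^ 2) := by
  have hs : 1 < (2 : ℂ).re := by norm_num
  have hL : LSeries ↗μ 2 = 6 / π ^ 2 := by
    have := LSeries_zeta_mul_Lseries_moebius hs
    rw [LSeries_zeta_eq_riemannZeta hs, riemannZeta_two] at this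
    field_simp at this ⊢
    linear_combination this
  have h : HasSum (LSeries.term ↗μ 2) (6 / π ^ 2) :=
    hL ▸ (LSeriesSummable_moebius_iff.2 hs).LSeriesHasSum
  rw [← Complex.hasSum_ofReal]
  convert h using 1
  · ext n
    rcases eq_or_ne n 0 with rfl | hn
    · simp
    · simp [LSeries.term_of_ne_zero hn]
  · push_cast
    rfl

theorem coprimeCode_density_two_events :
    Tendsto (fun N : ℕ => ((CoprimeCode N 2).card : ℝ) / (N.choose 2 : ℝ)) atTop
      (nhds (6 / Real.pi ^ 2)) := by
  simp_rw [card_coprimeCode_two_div_choose_two, ← hasSum_moebius_div_sq.tsum_eq,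
    div_eq_mul_one_div (μ _ : ℝ)]
  refine tendsto_tsum_of_dominated_convergence (bound := fun d : ℕ => 1 / (d : ℝ) ^ 2)
    (Real.summable_one_div_nat_pow.2 one_lt_two)
    (fun d => (tendsto_choose_two_div_div_choose_two d).const_mul _)
    (Eventually.of_forall fun N d => ?_)
  rw [norm_mul, ← one_mul (1 / (d : ℝ) ^ 2)]
  refine mul_le_mul ?_ ?_ (norm_nonneg _) zero_le_one
  · rw [Real.norm_eq_abs]
    exact_mod_cast abs_moebius_le_one
  · rw [Real.norm_of_nonneg (by positivity)]
    exact choose_two_div_div_choose_two_le N d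
end
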